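/- Let δ ∈ {1,−1} and let q1, q3 : ℝ² → ℂ be smooth functions of (x,t) satisfying the nonlocal massive Thirring model with sign δ at every point. Define q2(x,t) = δ·q1(−x,−t) and q4(x,t) = δ·q3(−x,−t). Then (q1, q2, q3, q4) satisfies the unreduced massive Thirring system at every point. -/

import Mathlib

open Complex

/-- Partial derivative with respect to the first (space) variable. -/
noncomputable def pdx (f : ℝ × ℝ → ℂ) (p : ℝ × ℝ) : ℂ := fderiv ℝ f p (1, 0)

/-- Partial derivative with respect to the second (time) variable. -/
noncomputable def pdt (f : ℝ × ℝ → ℂ) (p : ℝ × ℝ) : ℂ := fderiv ℝ f p (0, 1)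

lemma fderiv_comp_neg (f : ℝ × ℝ → ℂ) (hf : ContDiff ℝ (⊤ : ℕ∞) f) (p v : ℝ × ℝ) :
    fderiv ℝ (fun q => f (-q)) p v = - fderiv ℝ f (-p) v := by
  have h1 : HasFDerivAt (fun q : ℝ × ℝ => -q)
      (-(ContinuousLinearMap.id ℝ (ℝ × ℝ))) p := (hasFDerivAt_id p).neg
  have h2 : HasFDerivAt f (fderiv ℝ f (-p)) (-p) :=
    (hf.differentiable (by simp) (-p)).hasFDerivAt
  have h3 : HasFDerivAt (fun q => f (-q))
      ((fderiv ℝ f (-p)).comp (-(ContinuousLinearMap.id ℝ (ℝ × ℝ)))) p := h2.comp p h1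
  rw [h3.fderiv]
  simp

lemma pd_scaled_neg (δ : ℂ) (f : ℝ × ℝ → ℂ) (hf : ContDiff ℝ (⊤ : ℕ∞) f) (p v : ℝ × ℝ) :
    fderiv ℝ (fun q => δ * f (-q)) p v = -δ * fderiv ℝ f (-p) v := by
  have hd : DifferentiableAt ℝ (fun q : ℝ × ℝ => f (-q)) p :=
    (hf.differentiable (by simp) (-p)).comp p differentiableAt_id.neg
  rw [fderiv_const_mul hd δ]
  simp [fderiv_comp_neg f hf p v]

/-- The nonlocal reduction: a solution `(q1, q3)` of the nonlocal massive Thirring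
model with sign `δ` gives, with `q2(x,t) = δ·q1(−x,−t)` and `q4(x,t) = δ·q3(−x,−t)`,
a solution of the unreduced massive Thirring system. -/
theorem nonlocalMTM_to_unreducedMTM (δ : ℂ) (hδ : δ = 1 ∨ δ = -1)
    (q1 q3 : ℝ × ℝ → ℂ)
    (hq1 : ContDiff ℝ (⊤ : ℕ∞) q1) (hq3 : ContDiff ℝ (⊤ : ℕ∞) q3)
    (e1 : ∀ p : ℝ × ℝ, I * pdt q1 p + q3 p + δ * q1 p * q3 p * q3 (-p) = 0)
    (e2 : ∀ p : ℝ × ℝ, I * pdx q3 p + q1 p + δ * q3 p * q1 p * q1 (-p) = 0)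
    (q2 q4 : ℝ × ℝ → ℂ)
    (hq2 : q2 = fun p => δ * q1 (-p))
    (hq4 : q4 = fun p => δ * q3 (-p)) :
    ∀ p : ℝ × ℝ,
      (I * pdt q1 p + q3 p + q1 p * q3 p * q4 p = 0) ∧
      (I * pdt q2 p - q4 p - q2 p * q3 p * q4 p = 0) ∧
      (I * pdx q3 p + q1 p + q1 p * q2 p * q3 p = 0) ∧
      (I * pdx q4 p - q2 p - q1 p * q2 p * q4 p = 0) := by
  subst hq2 hq4
  intro p
  have h1 := e1 p
  have h2 := e2 p
  have h1n := e1 (-p)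
  have h2n := e2 (-p)
  rw [neg_neg] at h1n h2n
  have hp2 : pdt (fun q => δ * q1 (-q)) p = -δ * pdt q1 (-p) :=
    pd_scaled_neg δ q1 hq1 p (0, 1)
  have hp4 : pdx (fun q => δ * q3 (-q)) p = -δ * pdx q3 (-p) :=
    pd_scaled_neg δ q3 hq3 p (1, 0)
  refine ⟨?_, ?_, ?_, ?_⟩
  · linear_combination h1
  · simp only [hp2]
    linear_combination (-δ) * h1n
  · linear_combination h2
  · simp only [hp4]
    linear_combination (-δ) * h2n
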